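/- Let k be a field, n ≥ 1, and let T_n(k) be the algebra of upper triangular n × n matrices over k. For every group G and every map m : {1,…,n−1} → G there exists a grading of T_n(k) by G in which every elementary matrix E_{ij} with i ≤ j is homogeneous, with deg E_{ii} = 1 and deg E_{ij} = m(i)·m(i+1)⋯m(j−1) for i < j. Moreover, in any grading of T_n(k) in which all elementary matrices E_{ij} (i ≤ j) are homogeneous, the diagonal idempotents E_{ii} necessarily have trivial degree and the grading is completely determined by the degrees of the matrices E_{i,i+1}; such a grading is connected if and only if the image of m generates G. -/

import Mathlib

/-!
For `c : Fin n → G`, declaring `E_{ij}` to be of degree `(c i)⁻¹ * c j` is multiplicative,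
since `E_{ij} E_{jl} = E_{il}` and these degrees telescope; the pieces are spanned by disjoint
sets of matrix units, so this is a grading. Taking for `c` the partial products of `m` gives
`deg E_{i,i+1} = m i`, and the support `{(c i)⁻¹ * c j}` generates the same subgroup as the
image of `m`.

Conversely, in a good grading the product `E_{ij} E_{jl} = E_{il}` is nonzero, so the independence
of the homogeneous pieces forces `deg E_{il} = deg E_{ij} * deg E_{jl}`. For `i = j = l` this
gives `deg E_{ii} = 1`, and splitting off one step at a time gives the chain formula.
-/

open Matrix
set_option synthInstance.maxHeartbeats 1000000

/-- The subalgebra `T_n(k)` of upper triangular `n × n` matrices. -/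
def upperTriang (k : Type*) [Field k] (n : ℕ) :
    Subalgebra k (Matrix (Fin n) (Fin n) k) where
  carrier := {M | ∀ i j : Fin n, j < i → M i j = 0}
  add_mem' := fun {M N} hM hN i j hij => by
    simp [Matrix.add_apply, hM i j hij, hN i j hij]
  zero_mem' := fun i j _ => rfl
  mul_mem' := fun {M N} hM hN i j hij => by
    rw [Matrix.mul_apply]
    refine Finset.sum_eq_zero fun l _ => ?_
    rcases lt_or_ge l i with h | h
    · rw [hM i l h, zero_mul]
    · rw [hN l j (lt_of_lt_of_le hij h), mul_zero]
  one_mem' := fun i j hij => Matrix.one_apply_ne hij.ne'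
  algebraMap_mem' := fun r i j hij => by
    rw [Matrix.algebraMap_eq_diagonal]
    exact Matrix.diagonal_apply_ne _ hij.ne'

/-- The elementary matrix `E_{ij}` (with `i ≤ j`) as an element of `T_n(k)`. -/
def triE (k : Type*) [Field k] (n : ℕ) (i j : Fin n) (hij : i ≤ j) :
    upperTriang k n :=
  ⟨Matrix.single i j (1 : k), fun a b hba => by
    refine Matrix.single_apply_of_ne _ _ _ _ _ fun h => ?_
    rcases h with ⟨rfl, rfl⟩
    exact absurd hij (not_le.mpr hba)⟩

/-- Increasing cumulative product: `cumUp m j = m 0 * m 1 * ⋯ * m (j-1)`, so that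
`(cumUp m i)⁻¹ * cumUp m j = m i * m (i+1) * ⋯ * m (j-1)` for `i ≤ j`. -/
def cumUp {G : Type*} [Group G] (m : ℕ → G) : ℕ → G
  | 0 => 1
  | (j + 1) => cumUp m j * m j

/-- The telescoping product `chainUp d i j = d i (i+1) * d (i+1) (i+2) * ⋯ * d (j-1) j`. -/
def chainUp {G : Type*} [Group G] (d : ℕ → ℕ → G) (i j : ℕ) : G :=
  ((List.range' i (j - i)).map (fun t => d t (t + 1))).prod

section GradedModule

variable {R M ι : Type*} [Semiring R] [AddCommMonoid M] [Module R M] {X : ι → Submodule R M}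

theorem iSupIndep_of_projections (π : ι → M →ₗ[R] M) (hfix : ∀ i, ∀ x ∈ X i, π i x = x)
    (hkill : ∀ i j, i ≠ j → X j ≤ LinearMap.ker (π i)) : iSupIndep X := by
  refine iSupIndep_def.mpr fun i => Submodule.disjoint_def.mpr fun x hx hx' => ?_
  have hker : (⨆ j, ⨆ _ : j ≠ i, X j) ≤ LinearMap.ker (π i) :=
    iSup₂_le fun j hj => hkill i j (Ne.symm hj)
  rw [← hfix i x hx]
  exact hker hx'

theorem iSupIndep.eq_of_mem_of_mem (hX : iSupIndep X) {x : M} (hx : x ≠ 0) {i j : ι}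
    (hi : x ∈ X i) (hj : x ∈ X j) : i = j := by
  by_contra hij
  exact hx (Submodule.disjoint_def.mp (hX.pairwiseDisjoint hij) x hi hj)

end GradedModule

theorem iSupIndep.eq_mul_of_mul_mem {R A ι : Type*} [CommSemiring R] [Semiring A]
    [Algebra R A] [Mul ι] {X : ι → Submodule R A} (hX : iSupIndep X)
    (hmul : ∀ g h, X g * X h ≤ X (g * h)) {x y : A} {g h d : ι}
    (hx : x ∈ X g) (hy : y ∈ X h) (hxy : x * y ∈ X d) (hne : x * y ≠ 0) : d = g * h :=
  hX.eq_of_mem_of_mem hne hxy (hmul g h (Submodule.mul_mem_mul hx hy))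

section ChainUp

variable {G : Type*} [Group G]

theorem chainUp_self (d : ℕ → ℕ → G) (i : ℕ) : chainUp d i i = 1 := by
  simp [chainUp]

theorem chainUp_of_lt (d : ℕ → ℕ → G) {i j : ℕ} (hij : i < j) :
    chainUp d i j = d i (i + 1) * chainUp d (i + 1) j := by
  rw [chainUp, chainUp, show j - i = j - (i + 1) + 1 by omega, List.range'_succ,
    List.map_cons, List.prod_cons]

theorem eq_chainUp_of_mul {d : ℕ → ℕ → G} {n : ℕ} (hdiag : ∀ i < n, d i i = 1)
    (hmul : ∀ i j, i < j → j < n → d i j = d i (i + 1) * d (i + 1) j) :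
    ∀ i j, i ≤ j → j < n → d i j = chainUp d i j := by
  intro i j hij hjn
  induction hij using Nat.decreasingInduction with
  | self => rw [hdiag j hjn, chainUp_self]
  | of_succ i hij ih => rw [hmul i j hij hjn, ih, chainUp_of_lt d hij]

end ChainUp

section UpperTriang

variable {k : Type*} [Field k] {n : ℕ}

@[ext]
theorem upperTriang.ext {M N : upperTriang k n}
    (h : ∀ i j, (M : Matrix (Fin n) (Fin n) k) i j = (N : Matrix (Fin n) (Fin n) k) i j) :
    M = N :=
  Subtype.ext (Matrix.ext h)

theorem triE_ne_zero (i j : Fin n) (hij : i ≤ j) : triE k n i j hij ≠ 0 := by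
  intro h
  simpa [triE] using congrArg (fun M : upperTriang k n => (M : Matrix (Fin n) (Fin n) k) i j) h

theorem triE_mul_triE {i j l : Fin n} (hij : i ≤ j) (hjl : j ≤ l) :
    triE k n i j hij * triE k n j l hjl = triE k n i l (hij.trans hjl) :=
  Subtype.ext (by simp [triE])

end UpperTriang

section GoodGrading

variable {k : Type*} [Field k] {n : ℕ} {G : Type*} [Group G]

theorem degree_triE_eq_mul {X : G → Submodule k (upperTriang k n)} (hX : iSupIndep X)
    (hmul : ∀ g h, X g * X h ≤ X (g * h)) {d : ℕ → ℕ → G}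
    (hd : ∀ (i j : Fin n) (hij : i ≤ j), triE k n i j hij ∈ X (d i j))
    {i l j : Fin n} (hil : i ≤ l) (hlj : l ≤ j) : d i j = d i l * d l j := by
  have hprod := triE_mul_triE (k := k) hil hlj
  refine hX.eq_mul_of_mul_mem hmul (hd i l hil) (hd l j hlj) ?_ ?_
  · rw [hprod]; exact hd i j _
  · rw [hprod]; exact triE_ne_zero i j _

theorem degree_triE_self {X : G → Submodule k (upperTriang k n)} (hX : iSupIndep X)
    (hmul : ∀ g h, X g * X h ≤ X (g * h)) {d : ℕ → ℕ → G}
    (hd : ∀ (i j : Fin n) (hij : i ≤ j), triE k n i j hij ∈ X (d i j)) (i : Fin n) :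
    d i i = 1 :=
  left_eq_mul.mp (degree_triE_eq_mul hX hmul hd le_rfl le_rfl)

theorem degree_triE_eq_chainUp {X : G → Submodule k (upperTriang k n)} (hX : iSupIndep X)
    (hmul : ∀ g h, X g * X h ≤ X (g * h)) {d : ℕ → ℕ → G}
    (hd : ∀ (i j : Fin n) (hij : i ≤ j), triE k n i j hij ∈ X (d i j)) {i j : Fin n}
    (hij : i ≤ j) : d i j = chainUp d i j := by
  refine eq_chainUp_of_mul (fun i hi => degree_triE_self hX hmul hd ⟨i, hi⟩) ?_ i j hij j.2
  intro i j hij hjn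
  exact degree_triE_eq_mul (i := ⟨i, by omega⟩) (l := ⟨i + 1, by omega⟩) (j := ⟨j, hjn⟩)
    hX hmul hd (Fin.mk_le_mk.mpr (Nat.le_succ i)) (Fin.mk_le_mk.mpr hij)

end GoodGrading

section CoboundaryGrading

variable (k : Type*) [Field k] {n : ℕ} {G : Type*} [Group G] (c : Fin n → G)

/-- The grading of `T_n(k)` with `deg E_{ij} = (c i)⁻¹ * c j` -/
def triGrading (g : G) : Submodule k (upperTriang k n) where
  carrier := {M | ∀ i j, (c i)⁻¹ * c j ≠ g → (M : Matrix (Fin n) (Fin n) k) i j = 0}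
  add_mem' hM hN i j hij := by simp [hM i j hij, hN i j hij]
  zero_mem' _ _ _ := rfl
  smul_mem' a M hM i j hij := by simp [hM i j hij]

def triGradingProj [DecidableEq G] (g : G) : upperTriang k n →ₗ[k] upperTriang k n where
  toFun M := ⟨Matrix.of fun i j => if (c i)⁻¹ * c j = g then (M : Matrix _ _ k) i j else 0,
    fun i j hji => by simp [M.2 i j hji]⟩
  map_add' M N := by ext i j; simp [ite_add_ite]
  map_smul' a M := by ext i j; simp

variable {k c}

theorem triGradingProj_apply [DecidableEq G] (g : G) (M : upperTriang k n) (i j : Fin n) :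
    (triGradingProj k c g M : Matrix (Fin n) (Fin n) k) i j =
      if (c i)⁻¹ * c j = g then (M : Matrix _ _ k) i j else 0 :=
  rfl

theorem triGradingProj_mem [DecidableEq G] (g : G) (M : upperTriang k n) :
    triGradingProj k c g M ∈ triGrading k c g := fun i j hij => by
  simp [triGradingProj_apply, hij]

theorem triE_mem_triGrading (i j : Fin n) (hij : i ≤ j) :
    triE k n i j hij ∈ triGrading k c ((c i)⁻¹ * c j) := by
  intro a b hab
  refine Matrix.single_apply_of_ne _ _ _ _ _ ?_
  rintro ⟨rfl, rfl⟩
  exact hab rfl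

theorem iSupIndep_triGrading : iSupIndep (triGrading k c) := by
  classical
  refine iSupIndep_of_projections (triGradingProj k c) (fun g M hM => ?_) fun g h hgh M hM => ?_
  · ext i j
    by_cases hij : (c i)⁻¹ * c j = g
    · simp [triGradingProj_apply, hij]
    · simp [triGradingProj_apply, hij, hM i j hij]
  · ext i j
    by_cases hij : (c i)⁻¹ * c j = g
    · simp [triGradingProj_apply, hij, hM i j (hij.trans_ne hgh)]
    · simp [triGradingProj_apply, hij]

theorem iSup_triGrading : ⨆ g, triGrading k c g = ⊤ := by
  classical
  refine eq_top_iff.mpr fun M _ => ?_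
  let degrees := Finset.univ.image fun p : Fin n × Fin n => (c p.1)⁻¹ * c p.2
  have hM : M = ∑ g ∈ degrees, triGradingProj k c g M := by
    ext i j
    simp [Matrix.sum_apply, triGradingProj_apply, degrees]
  rw [hM]
  exact Submodule.sum_mem _ fun g _ => Submodule.mem_iSup_of_mem g (triGradingProj_mem g M)

theorem triGrading_mul_le (g h : G) :
    triGrading k c g * triGrading k c h ≤ triGrading k c (g * h) := by
  refine Submodule.mul_le.mpr fun M hM N hN i j hij => ?_
  refine (Matrix.mul_apply (M := (M : Matrix (Fin n) (Fin n) k))).trans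
    (Finset.sum_eq_zero fun l _ => ?_)
  by_cases hil : (c i)⁻¹ * c l = g
  · have hlj : (c l)⁻¹ * c j ≠ h := fun hlj => hij (by rw [← hil, ← hlj]; group)
    simp [hN l j hlj]
  · simp [hM i l hil]

theorem triGrading_ne_bot_iff (g : G) :
    triGrading k c g ≠ ⊥ ↔ ∃ i j : Fin n, i ≤ j ∧ (c i)⁻¹ * c j = g := by
  constructor
  · intro hg
    obtain ⟨M, hM, hM0⟩ := (Submodule.ne_bot_iff _).mp hg
    by_contra! hdeg
    refine hM0 (upperTriang.ext fun i j => ?_)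
    rcases lt_or_ge j i with hji | hij
    · exact M.2 i j hji
    · exact hM i j (hdeg i j hij)
  · rintro ⟨i, j, hij, rfl⟩
    exact (Submodule.ne_bot_iff _).mpr ⟨_, triE_mem_triGrading i j hij, triE_ne_zero i j hij⟩

end CoboundaryGrading

section CumUp

variable {G : Type*} [Group G]

theorem cumUp_mem {f : ℕ → G} {H : Subgroup G} (hf : ∀ t, f t ∈ H) (t : ℕ) :
    cumUp f t ∈ H := by
  induction t with
  | zero => exact H.one_mem
  | succ t ih => exact H.mul_mem ih (hf t)

theorem inv_cumUp_mul_cumUp_succ (f : ℕ → G) (t : ℕ) :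
    (cumUp f t)⁻¹ * cumUp f (t + 1) = f t := by
  simp [cumUp]

def padOne {N : ℕ} (m : Fin N → G) (t : ℕ) : G :=
  if h : t < N then m ⟨t, h⟩ else 1

theorem closure_cumUp_padOne_quotients {n : ℕ} (m : Fin (n - 1) → G) :
    Subgroup.closure {g | ∃ i j : Fin n, i ≤ j ∧
      (cumUp (padOne m) i)⁻¹ * cumUp (padOne m) j = g} = Subgroup.closure (Set.range m) := by
  refine le_antisymm (Subgroup.closure_le _ |>.mpr ?_) (Subgroup.closure_mono ?_)
  · have hpad (t : ℕ) : padOne m t ∈ Subgroup.closure (Set.range m) := by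
      unfold padOne
      split_ifs
      exacts [Subgroup.subset_closure ⟨_, rfl⟩, Subgroup.one_mem _]
    rintro _ ⟨i, j, -, rfl⟩
    exact mul_mem (inv_mem (cumUp_mem hpad i)) (cumUp_mem hpad j)
  · rintro _ ⟨t, rfl⟩
    refine ⟨⟨t, by omega⟩, ⟨t + 1, by omega⟩, Fin.mk_le_mk.mpr (Nat.le_succ t), ?_⟩
    rw [inv_cumUp_mul_cumUp_succ]
    simp [padOne]

end CumUp

theorem stmt15_general (k : Type*) [Field k] (n : ℕ) (G : Type*) [Group G]
    (m : Fin (n - 1) → G) :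
    (∃ X : G → Submodule k (upperTriang k n),
      iSupIndep X ∧ (⨆ g, X g) = ⊤ ∧
      (∀ g h, X g * X h ≤ X (g * h)) ∧
      (∀ (i j : Fin n) (hij : i ≤ j),
        triE k n i j hij ∈
          X ((cumUp (fun t => if h : t < n - 1 then m ⟨t, h⟩ else 1) (i : ℕ))⁻¹ *
            cumUp (fun t => if h : t < n - 1 then m ⟨t, h⟩ else 1) (j : ℕ))) ∧
      (Subgroup.closure {g | X g ≠ ⊥} = ⊤ ↔ Subgroup.closure (Set.range m) = ⊤)) ∧
    (∀ X : G → Submodule k (upperTriang k n),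
      iSupIndep X → (⨆ g, X g) = ⊤ → (∀ g h, X g * X h ≤ X (g * h)) →
      ∀ d : ℕ → ℕ → G,
        (∀ (i j : Fin n) (hij : i ≤ j), triE k n i j hij ∈ X (d (i : ℕ) (j : ℕ))) →
        (∀ i : Fin n, d (i : ℕ) (i : ℕ) = 1) ∧
        (∀ i j : Fin n, i ≤ j → d (i : ℕ) (j : ℕ) = chainUp d (i : ℕ) (j : ℕ))) := by
  refine ⟨⟨triGrading k fun i : Fin n => cumUp (padOne m) i, iSupIndep_triGrading,
    iSup_triGrading, triGrading_mul_le, triE_mem_triGrading, ?_⟩,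
    fun X hX _ hmul d hd => ⟨degree_triE_self hX hmul hd,
      fun i j hij => degree_triE_eq_chainUp hX hmul hd hij⟩⟩
  rw [Set.ext fun g => triGrading_ne_bot_iff g, closure_cumUp_padOne_quotients]

/-- For every group `G` and every `m : {1,…,n−1} → G` there is a good grading of `T_n(k)`
with `deg E_{ii} = 1` and `deg E_{ij} = m(i)·m(i+1)⋯m(j−1)` for `i < j`, connected iff the
image of `m` generates `G`.  Moreover, in any grading of `T_n(k)` with all `E_{ij}`
(`i ≤ j`) homogeneous, the diagonal idempotents `E_{ii}` have trivial degree and the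
grading is determined by the degrees of the `E_{i,i+1}`:
`deg E_{ij} = deg E_{i,i+1} ⋯ deg E_{j-1,j}`. -/
theorem stmt15 (k : Type*) [Field k] (n : ℕ) (hn : 1 ≤ n) (G : Type*) [Group G]
    (m : Fin (n - 1) → G) :
    (∃ X : G → Submodule k (upperTriang k n),
      iSupIndep X ∧ (⨆ g, X g) = ⊤ ∧
      (∀ g h, X g * X h ≤ X (g * h)) ∧
      (∀ (i j : Fin n) (hij : i ≤ j),
        triE k n i j hij ∈
          X ((cumUp (fun t => if h : t < n - 1 then m ⟨t, h⟩ else 1) (i : ℕ))⁻¹ *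
            cumUp (fun t => if h : t < n - 1 then m ⟨t, h⟩ else 1) (j : ℕ))) ∧
      (Subgroup.closure {g | X g ≠ ⊥} = ⊤ ↔ Subgroup.closure (Set.range m) = ⊤)) ∧
    (∀ X : G → Submodule k (upperTriang k n),
      iSupIndep X → (⨆ g, X g) = ⊤ → (∀ g h, X g * X h ≤ X (g * h)) →
      ∀ d : ℕ → ℕ → G,
        (∀ (i j : Fin n) (hij : i ≤ j), triE k n i j hij ∈ X (d (i : ℕ) (j : ℕ))) →
        (∀ i : Fin n, d (i : ℕ) (i : ℕ) = 1) ∧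
        (∀ i j : Fin n, i ≤ j → d (i : ℕ) (j : ℕ) = chainUp d (i : ℕ) (j : ℕ))) :=
  stmt15_general k n G m
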